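/- arXiv:2401.16933 — 2 statements merged into one kernel-verified Lean document; each statement's English description precedes it below -/
import Mathlib

section
/- Fix an integer k with 1 ≤ k ≤ n. Define the totally isotropic subspaces X_0 = span(e_1,…,e_k), X_j = span(e_1^∨,…,e_j^∨, e_{j+1},…,e_k) for 1 ≤ j ≤ k−1, and X_k = span(e_1^∨,…,e_k^∨) of F^{2n}. Then every k-dimensional totally isotropic subspace Y of F^{2n} lies in the P-orbit of exactly one of X_0, X_1, …, X_k; more precisely, Y lies in the P-orbit of X_j if and only if dim(Y ∩ V_0) = k − j. In particular, the action of the Siegel parabolic P on the set of k-dimensional totally isotropic subspaces of F^{2n} has exactly k+1 orbits, with representatives X_0, …, X_k. -/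
open Matrix

variable (F : Type*) [Field F]

/-- The standard alternating matrix `J = [[0, I], [-I, 0]]`. -/
def Jmat (n : ℕ) : Matrix (Fin n ⊕ Fin n) (Fin n ⊕ Fin n) F :=
  Matrix.fromBlocks 0 1 (-1) 0

/-- The Siegel parabolic subgroup `P` of `Sp_{2n}(F)`, as a set of matrices. -/
def SiegelP (n : ℕ) : Set (Matrix (Fin n ⊕ Fin n) (Fin n ⊕ Fin n) F) :=
  {m | ∃ g X : Matrix (Fin n) (Fin n) F,
    IsUnit g ∧ (g⁻¹ * X)ᵀ = g⁻¹ * X ∧ m = Matrix.fromBlocks g X 0 (g⁻¹)ᵀ}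

/-- `V₀ = span(e_1, …, e_n)`. -/
def V0 (n : ℕ) : Submodule F ((Fin n ⊕ Fin n) → F) :=
  Submodule.span F {v : (Fin n ⊕ Fin n) → F | ∃ i : Fin n, v = Pi.single (Sum.inl i) 1}

/-- `X_j = span(e_1^∨, …, e_j^∨, e_{j+1}, …, e_k)` (0-based indexing of the basis). -/
def Xsp (n k j : ℕ) : Submodule F ((Fin n ⊕ Fin n) → F) :=
  Submodule.span F
    ({v : (Fin n ⊕ Fin n) → F | ∃ i : Fin n, (i : ℕ) < j ∧ v = Pi.single (Sum.inr i) 1} ∪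
     {v : (Fin n ⊕ Fin n) → F | ∃ i : Fin n, j ≤ (i : ℕ) ∧ (i : ℕ) < k ∧
        v = Pi.single (Sum.inl i) 1})

/-- A subspace `Y ⊆ F^{2n}` is totally isotropic for the form `B(v,w) = ᵗv J w`. -/
def TotIso (n : ℕ) (Y : Submodule F ((Fin n ⊕ Fin n) → F)) : Prop :=
  ∀ v ∈ Y, ∀ w ∈ Y, v ⬝ᵥ (Jmat F n).mulVec w = 0

namespace SiegelAux

open Module Submodule

variable {F : Type*} [Field F] {n : ℕ}

def pr2 (F : Type*) [Field F] (n : ℕ) :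
    ((Fin n ⊕ Fin n) → F) →ₗ[F] (Fin n → F) := LinearMap.funLeft F F Sum.inr

@[simp] lemma pr2_apply (v : (Fin n ⊕ Fin n) → F) : pr2 F n v = v ∘ Sum.inr := rfl

lemma comp_inl_single_inl (i : Fin n) :
    (Pi.single (Sum.inl i) 1 : (Fin n ⊕ Fin n) → F) ∘ Sum.inl = Pi.single i 1 := by
  funext m; by_cases h : m = i <;> simp [h, Pi.single_apply]

lemma comp_inr_single_inl (i : Fin n) :
    (Pi.single (Sum.inl i) 1 : (Fin n ⊕ Fin n) → F) ∘ Sum.inr = 0 := by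
  funext m; simp [Pi.single_apply]

lemma comp_inl_single_inr (i : Fin n) :
    (Pi.single (Sum.inr i) 1 : (Fin n ⊕ Fin n) → F) ∘ Sum.inl = 0 := by
  funext m; simp [Pi.single_apply]

lemma comp_inr_single_inr (i : Fin n) :
    (Pi.single (Sum.inr i) 1 : (Fin n ⊕ Fin n) → F) ∘ Sum.inr = Pi.single i 1 := by
  funext m; by_cases h : m = i <;> simp [h, Pi.single_apply]

lemma elim_comp (v : (Fin n ⊕ Fin n) → F) : Sum.elim (v ∘ Sum.inl) (v ∘ Sum.inr) = v := by
  funext s; cases s <;> rfl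

lemma V0_eq_ker : V0 F n = LinearMap.ker (pr2 F n) := by
  apply le_antisymm
  · rw [V0, Submodule.span_le]
    rintro v ⟨i, rfl⟩
    simp only [SetLike.mem_coe, LinearMap.mem_ker]
    exact comp_inr_single_inl i
  · intro v hv
    rw [LinearMap.mem_ker] at hv
    have hv' : ∀ m, v (Sum.inr m) = 0 := fun m => congrFun hv m
    have hs : v = ∑ s : Fin n ⊕ Fin n, Pi.single s (v s) := (Finset.univ_sum_single v).symm
    rw [hs]
    apply Submodule.sum_mem
    rintro (i | i) _
    · have h1 : (Pi.single (Sum.inl i) (v (Sum.inl i)) : (Fin n ⊕ Fin n) → F)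
          = v (Sum.inl i) • (Pi.single (Sum.inl i) 1 : (Fin n ⊕ Fin n) → F) := by
        rw [← Pi.single_smul, smul_eq_mul, mul_one]
      rw [h1]
      exact Submodule.smul_mem _ _ (Submodule.subset_span ⟨i, rfl⟩)
    · rw [hv' i, Pi.single_zero]; exact Submodule.zero_mem _

lemma mem_V0_iff {v : (Fin n ⊕ Fin n) → F} : v ∈ V0 F n ↔ v ∘ Sum.inr = 0 := by
  rw [V0_eq_ker, LinearMap.mem_ker]; rfl

lemma form_eq (v w : (Fin n ⊕ Fin n) → F) :
    v ⬝ᵥ (Jmat F n).mulVec w =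
      (v ∘ Sum.inl) ⬝ᵥ (w ∘ Sum.inr) - (v ∘ Sum.inr) ⬝ᵥ (w ∘ Sum.inl) := by
  have h1 : (Jmat F n).mulVec w = Sum.elim (w ∘ Sum.inr) (-(w ∘ Sum.inl)) := by
    simp [Jmat, fromBlocks_mulVec, Matrix.neg_mulVec]
  rw [h1]
  simp [dotProduct, Fintype.sum_sum_type, sub_eq_add_neg, mul_neg, ← Finset.sum_neg_distrib]

end SiegelAux

section Part2
namespace SiegelAux
variable {F : Type*} [Field F] {n : ℕ}
open Module Submodule

lemma li_single_comp {ι : Type*} [Fintype ι] [DecidableEq ι] {κ : Type*} (f : κ → ι)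
    (hf : Function.Injective f) :
    LinearIndependent F (fun k => (Pi.single (f k) 1 : ι → F)) := by
  have h1 := (Pi.basisFun F ι).linearIndependent
  have h2 := h1.comp f hf
  convert h2 using 2 with k
  simp [Pi.basisFun_apply]

lemma dotProduct_eq_apply (φ : (Fin n → F) →ₗ[F] F) (v : Fin n → F) :
    v ⬝ᵥ (fun m => φ (Pi.single m 1)) = φ v := by
  have h : φ v = ∑ m, v m * φ (Pi.single m 1) := by
    conv_lhs => rw [← Finset.univ_sum_single v]
    rw [map_sum]
    refine Finset.sum_congr rfl fun m _ => ?_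
    have h1 : (Pi.single m (v m) : Fin n → F) = v m • (Pi.single m 1 : Fin n → F) := by
      rw [← Pi.single_smul, smul_eq_mul, mul_one]
    rw [h1, _root_.map_smul, smul_eq_mul]
  rw [h]; rfl

lemma exists_dual_family {j : ℕ} (b : Fin j → (Fin n → F)) (hb : LinearIndependent F b) :
    ∃ dv : Fin j → (Fin n → F), ∀ i l, b i ⬝ᵥ dv l = if i = l then 1 else 0 := by
  classical
  let f : (Fin j → F) →ₗ[F] (Fin n → F) :=
    { toFun := fun c => ∑ i, c i • b i
      map_add' := by intros x y; simp [add_smul, Finset.sum_add_distrib]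
      map_smul' := by intros r x; simp [Finset.smul_sum, smul_smul] }
  have hker : LinearMap.ker f = ⊥ := by
    rw [LinearMap.ker_eq_bot']
    intro c hc
    funext i
    exact Fintype.linearIndependent_iff.mp hb c hc i
  obtain ⟨g, hg⟩ := f.exists_leftInverse_of_injective hker
  have hf1 : ∀ i, f (Pi.single i 1) = b i := by
    intro i
    have hfe : f (Pi.single i 1) = ∑ m, (Pi.single i 1 : Fin j → F) m • b m := rfl
    rw [hfe, Finset.sum_eq_single i]
    · simp
    · intro m _ hm; simp [Pi.single_apply, hm]
    · intro h; exact absurd (Finset.mem_univ i) h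
  refine ⟨fun l => fun m => (LinearMap.proj l).comp g (Pi.single m 1), fun i l => ?_⟩
  rw [dotProduct_eq_apply ((LinearMap.proj l).comp g) (b i)]
  have : g (b i) = Pi.single i 1 := by
    rw [← hf1 i, ← LinearMap.comp_apply, hg]; rfl
  simp only [LinearMap.comp_apply, this, LinearMap.proj_apply]
  by_cases h : i = l <;> simp [h, Pi.single_apply]

lemma mulVec_eq_sum_cols (g : Matrix (Fin n) (Fin n) F) (v : Fin n → F) :
    g *ᵥ v = ∑ l, v l • (fun m => g m l) := by
  funext m
  simp [Matrix.mulVec, dotProduct, Finset.sum_apply, mul_comm]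

lemma isUnit_of_li_cols (g : Matrix (Fin n) (Fin n) F)
    (h : LinearIndependent F (fun l => (fun m => g m l))) : IsUnit g := by
  rw [Matrix.isUnit_iff_isUnit_det, isUnit_iff_ne_zero]
  intro hdet
  obtain ⟨v, hv0, hv⟩ := (Matrix.exists_mulVec_eq_zero_iff).2 hdet
  apply hv0
  funext l
  refine Fintype.linearIndependent_iff.mp h v ?_ l
  rw [← mulVec_eq_sum_cols, hv]

noncomputable def unitEquiv {m : Type*} [Fintype m] [DecidableEq m] (p : Matrix m m F)
    (hp : IsUnit p) : ((m → F) ≃ₗ[F] (m → F)) :=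
  LinearEquiv.ofLinear p.mulVecLin (p⁻¹).mulVecLin
    (by rw [← Matrix.mulVecLin_mul, Matrix.mul_nonsing_inv _ ((Matrix.isUnit_iff_isUnit_det p).1 hp),
          Matrix.mulVecLin_one])
    (by rw [← Matrix.mulVecLin_mul, Matrix.nonsing_inv_mul _ ((Matrix.isUnit_iff_isUnit_det p).1 hp),
          Matrix.mulVecLin_one])

lemma unitEquiv_coe {m : Type*} [Fintype m] [DecidableEq m] (p : Matrix m m F) (hp : IsUnit p) :
    (unitEquiv p hp : (m → F) →ₗ[F] (m → F)) = p.mulVecLin := rfl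

lemma extend_li_aux {V : Type*} [AddCommGroup V] [Module F V] [FiniteDimensional F V]
    (c : ℕ) : ∀ {d : ℕ} (v : Fin d → V), LinearIndependent F v → d + c ≤ finrank F V →
    ∃ w : Fin (d + c) → V, LinearIndependent F w ∧ ∀ i : Fin d, w (Fin.castAdd c i) = v i := by
  induction c with
  | zero =>
    intro d v hv _
    exact ⟨v, hv, fun i => congrArg v (Fin.ext rfl)⟩
  | succ c ih =>
    intro d v hv hm
    obtain ⟨w, hw, hwp⟩ := ih v hv (by omega)
    obtain ⟨x, hx⟩ := exists_linearIndependent_snoc_of_lt_finrank hw (by omega)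
    refine ⟨Fin.snoc w x, hx, fun i => ?_⟩
    have h1 : (Fin.castAdd (c+1) i : Fin (d + (c+1))) = Fin.castSucc (Fin.castAdd c i) :=
      Fin.ext rfl
    rw [h1, Fin.snoc_castSucc, hwp]

lemma extend_li {V : Type*} [AddCommGroup V] [Module F V] [FiniteDimensional F V]
    {d m : ℕ} (hdm : d ≤ m) (hm : m = finrank F V) (v : Fin d → V)
    (hv : LinearIndependent F v) :
    ∃ w : Fin m → V, LinearIndependent F w ∧
      ∀ i : Fin d, w ⟨i.val, lt_of_lt_of_le i.2 hdm⟩ = v i := by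
  obtain ⟨w, hw, hwp⟩ := extend_li_aux (m - d) v hv (by omega)
  refine ⟨fun l => w (Fin.cast (by omega) l), hw.comp _ (fun a b hab => ?_), fun i => ?_⟩
  · simpa [Fin.ext_iff] using congrArg Fin.val hab
  · rw [← hwp i]
    exact congrArg w (Fin.ext rfl)

end SiegelAux
end Part2

section Part3
namespace SiegelAux
variable {F : Type*} [Field F] {n : ℕ}
open Module Submodule

lemma li_elim {a c : ℕ} (whi : Fin a → ((Fin n ⊕ Fin n) → F))
    (wlo : Fin c → ((Fin n ⊕ Fin n) → F))
    (hhi : LinearIndependent F (fun i => (whi i) ∘ Sum.inr))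
    (hlo0 : ∀ i, (wlo i) ∘ Sum.inr = 0)
    (hlo : LinearIndependent F wlo) :
    LinearIndependent F (Sum.elim whi wlo) := by
  rw [Fintype.linearIndependent_iff]
  intro g hg
  have h2 : ∑ i : Fin a, g (Sum.inl i) • ((whi i) ∘ Sum.inr) = 0 := by
    have h3 := congrArg (pr2 F n) hg
    rw [map_sum, map_zero, Fintype.sum_sum_type] at h3
    simp only [_root_.map_smul, pr2_apply, Sum.elim_inl, Sum.elim_inr] at h3
    simpa [hlo0] using h3
  have hz1 : ∀ i, g (Sum.inl i) = 0 := Fintype.linearIndependent_iff.mp hhi _ h2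
  have h4 : ∑ i : Fin c, g (Sum.inr i) • wlo i = 0 := by
    rw [Fintype.sum_sum_type] at hg
    simpa [hz1] using hg
  have hz2 := Fintype.linearIndependent_iff.mp hlo _ h4
  rintro (i|i)
  exacts [hz1 i, hz2 i]

lemma span_elim_inf_V0 {a c : ℕ} (whi : Fin a → ((Fin n ⊕ Fin n) → F))
    (wlo : Fin c → ((Fin n ⊕ Fin n) → F))
    (hhi : LinearIndependent F (fun i => (whi i) ∘ Sum.inr))
    (hlo0 : ∀ i, (wlo i) ∘ Sum.inr = 0) :
    Submodule.span F (Set.range (Sum.elim whi wlo)) ⊓ V0 F n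
      = Submodule.span F (Set.range wlo) := by
  apply le_antisymm
  · rintro v hv
    rw [Submodule.mem_inf] at hv
    obtain ⟨hv1, hv2⟩ := hv
    obtain ⟨g, hg⟩ := (mem_span_range_iff_exists_fun F).1 hv1
    rw [mem_V0_iff] at hv2
    have h2 : ∑ i : Fin a, g (Sum.inl i) • ((whi i) ∘ Sum.inr) = 0 := by
      have h3 := congrArg (pr2 F n) hg
      rw [map_sum, Fintype.sum_sum_type] at h3
      simp only [_root_.map_smul, pr2_apply, Sum.elim_inl, Sum.elim_inr] at h3
      rw [hv2] at h3
      simpa [hlo0] using h3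
    have hz1 : ∀ i, g (Sum.inl i) = 0 := Fintype.linearIndependent_iff.mp hhi _ h2
    rw [← hg, Fintype.sum_sum_type]
    have hz : ∑ i : Fin a, g (Sum.inl i) • Sum.elim whi wlo (Sum.inl i) = 0 := by
      simp [hz1]
    rw [hz, zero_add]
    exact Submodule.sum_mem _
      (fun i _ => Submodule.smul_mem _ _ (Submodule.subset_span ⟨i, rfl⟩))
  · apply le_inf
    · exact Submodule.span_mono (by rintro x ⟨i, rfl⟩; exact ⟨Sum.inr i, rfl⟩)
    · rw [Submodule.span_le]
      rintro x ⟨i, rfl⟩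
      exact mem_V0_iff.2 (hlo0 i)

variable (F) in
def xA (n j : ℕ) (h : j ≤ n) : Fin j → ((Fin n ⊕ Fin n) → F) :=
  fun i => Pi.single (Sum.inr ⟨i.val, lt_of_lt_of_le i.2 h⟩) 1

variable (F) in
def xB (n k j : ℕ) (h : k ≤ n) : Fin (k - j) → ((Fin n ⊕ Fin n) → F) :=
  fun i => Pi.single (Sum.inl ⟨j + i.val, by have := i.2; omega⟩) 1

lemma single_congr {s t : Fin n ⊕ Fin n} (h : s = t) :
    (Pi.single s 1 : (Fin n ⊕ Fin n) → F) = Pi.single t 1 := by rw [h]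

lemma Xsp_eq {k j : ℕ} (hjk : j ≤ k) (hkn : k ≤ n) :
    Xsp F n k j = Submodule.span F
      (Set.range (Sum.elim (xA F n j (hjk.trans hkn)) (xB F n k j hkn))) := by
  rw [Xsp]
  congr 1
  ext v
  constructor
  · rintro (⟨i, hij, rfl⟩ | ⟨i, hji, hik, rfl⟩)
    · exact ⟨Sum.inl ⟨i.val, hij⟩, rfl⟩
    · refine ⟨Sum.inr ⟨i.val - j, by omega⟩, ?_⟩
      exact single_congr (congrArg Sum.inl (Fin.ext (by simp; omega)))
  · rintro ⟨(i|i), rfl⟩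
    · exact Or.inl ⟨⟨i.val, lt_of_lt_of_le i.2 (hjk.trans hkn)⟩, i.2, rfl⟩
    · exact Or.inr ⟨⟨j + i.val, by have := i.2; omega⟩, by show j ≤ j + i.val; omega,
        by show j + i.val < k; have := i.2; omega, rfl⟩

lemma xA_li {j : ℕ} (h : j ≤ n) :
    LinearIndependent F (fun i => (xA F n j h i) ∘ Sum.inr) := by
  have he : (fun i => (xA F n j h i) ∘ Sum.inr)
      = fun i : Fin j => (Pi.single (⟨i.val, lt_of_lt_of_le i.2 h⟩ : Fin n) 1 : Fin n → F) := by
    funext i; exact comp_inr_single_inr _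
  rw [he]
  exact li_single_comp _ (fun a b hab => Fin.ext (by simpa [Fin.ext_iff] using hab))

lemma xB_inr {k j : ℕ} (h : k ≤ n) (i : Fin (k - j)) : (xB F n k j h i) ∘ Sum.inr = 0 :=
  comp_inr_single_inl _

lemma xB_li {k j : ℕ} (h : k ≤ n) : LinearIndependent F (xB F n k j h) :=
  li_single_comp (fun i : Fin (k - j) => (Sum.inl ⟨j + i.val, by have := i.2; omega⟩ : Fin n ⊕ Fin n))
    (fun a b hab => by
      simp only [Sum.inl.injEq, Fin.ext_iff] at hab
      exact Fin.ext (by omega))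

set_option maxHeartbeats 1000000 in
lemma Xsp_inf_V0_finrank {k j : ℕ} (hjk : j ≤ k) (hkn : k ≤ n) :
    Module.finrank F ↥(Xsp F n k j ⊓ V0 F n) = k - j := by
  have h1 := span_elim_inf_V0 (xA F n j (hjk.trans hkn)) (xB F n k j hkn)
    (xA_li (hjk.trans hkn)) (xB_inr hkn)
  rw [Xsp_eq hjk hkn, h1]
  have h2 := finrank_span_eq_card (R := F) (xB_li (n := n) (k := k) (j := j) hkn)
  rw [h2, Fintype.card_fin]

lemma fromBlocks_mulVec_single_inl (g X D : Matrix (Fin n) (Fin n) F) (i : Fin n) :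
    (Matrix.fromBlocks g X 0 D) *ᵥ Pi.single (Sum.inl i) 1
      = Sum.elim (g *ᵥ Pi.single i 1) 0 := by
  rw [fromBlocks_mulVec, comp_inl_single_inl, comp_inr_single_inl]
  simp only [Matrix.mulVec_zero, Matrix.zero_mulVec, add_zero, zero_add]

lemma fromBlocks_mulVec_single_inr (g X D : Matrix (Fin n) (Fin n) F) (i : Fin n) :
    (Matrix.fromBlocks g X 0 D) *ᵥ Pi.single (Sum.inr i) 1
      = Sum.elim (X *ᵥ Pi.single i 1) (D *ᵥ Pi.single i 1) := by
  rw [fromBlocks_mulVec, comp_inl_single_inr, comp_inr_single_inr]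
  simp only [Matrix.mulVec_zero, Matrix.zero_mulVec, add_zero, zero_add]

end SiegelAux
end Part3

section Part4
namespace SiegelAux
variable {F : Type*} [Field F] {n : ℕ}
open Module Submodule

lemma isUnit_of_mem_SiegelP {p : Matrix (Fin n ⊕ Fin n) (Fin n ⊕ Fin n) F}
    (hp : p ∈ SiegelP F n) : IsUnit p := by
  obtain ⟨g, X, hg, hsymm, rfl⟩ := hp
  rw [Matrix.isUnit_iff_isUnit_det, Matrix.det_fromBlocks_zero₂₁]
  have hdg : IsUnit g.det := (Matrix.isUnit_iff_isUnit_det g).1 hg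
  refine hdg.mul ?_
  rw [Matrix.det_transpose, Matrix.det_nonsing_inv]
  exact isUnit_ringInverse.2 hdg

lemma map_V0_of_mem_SiegelP {p : Matrix (Fin n ⊕ Fin n) (Fin n ⊕ Fin n) F}
    (hp : p ∈ SiegelP F n) :
    Submodule.map (Matrix.mulVecLin p) (V0 F n) = V0 F n := by
  have hup := isUnit_of_mem_SiegelP hp
  have hle : Submodule.map (Matrix.mulVecLin p) (V0 F n) ≤ V0 F n := by
    rw [Submodule.map_le_iff_le_comap, V0, Submodule.span_le]
    rintro v ⟨i, rfl⟩
    obtain ⟨g, X, hg, hsymm, hpe⟩ := hp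
    simp only [SetLike.mem_coe, Submodule.mem_comap, Matrix.mulVecLin_apply]
    rw [hpe, fromBlocks_mulVec_single_inl, ← V0]
    exact mem_V0_iff.2 (Sum.elim_comp_inr _ _)
  have hfr : Module.finrank F ↥(Submodule.map (Matrix.mulVecLin p) (V0 F n))
      = Module.finrank F ↥(V0 F n) := by
    have h := LinearEquiv.finrank_map_eq (unitEquiv p hup) (V0 F n)
    rwa [unitEquiv_coe] at h
  exact Submodule.eq_of_le_of_finrank_eq hle hfr

lemma finrank_inf_of_map {k j : ℕ} (hjk : j ≤ k) (hkn : k ≤ n)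
    {p : Matrix (Fin n ⊕ Fin n) (Fin n ⊕ Fin n) F} (hp : p ∈ SiegelP F n)
    {Y : Submodule F ((Fin n ⊕ Fin n) → F)}
    (hmap : Submodule.map (Matrix.mulVecLin p) (Xsp F n k j) = Y) :
    Module.finrank F ↥(Y ⊓ V0 F n) = k - j := by
  have hup := isUnit_of_mem_SiegelP hp
  have hinj : Function.Injective (Matrix.mulVecLin p) :=
    fun x y h => (unitEquiv p hup).injective h
  have h5 : Y ⊓ V0 F n = Submodule.map (Matrix.mulVecLin p) (Xsp F n k j ⊓ V0 F n) := by
    rw [Submodule.map_inf _ hinj, hmap, map_V0_of_mem_SiegelP hp]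
  rw [h5]
  have h6 := LinearEquiv.finrank_map_eq (unitEquiv p hup) (Xsp F n k j ⊓ V0 F n)
  rw [unitEquiv_coe] at h6
  rw [h6]
  exact Xsp_inf_V0_finrank hjk hkn

end SiegelAux
end Part4

section Part5
namespace SiegelAux
variable {F : Type*} [Field F] {n : ℕ}
open Module Submodule

lemma exists_g {j d : ℕ} (hjd : j + d ≤ n) (b : Fin j → (Fin n → F))
    (hb : LinearIndependent F b) (alo : Fin d → (Fin n → F))
    (halo : LinearIndependent F alo) (horth : ∀ m i, b m ⬝ᵥ alo i = 0) :
    ∃ g : Matrix (Fin n) (Fin n) F, IsUnit g ∧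
      (∀ (i : Fin j) (h : (i : ℕ) < n), gᵀ *ᵥ b i = Pi.single (⟨i.val, h⟩ : Fin n) 1) ∧
      (∀ (i : Fin d) (h : j + (i : ℕ) < n),
        g *ᵥ Pi.single (⟨j + i.val, h⟩ : Fin n) 1 = alo i) := by
  classical
  obtain ⟨dv, hdv⟩ := exists_dual_family b hb
  set M : Matrix (Fin j) (Fin n) F := Matrix.of b with hMdef
  set Wp : Submodule F (Fin n → F) := LinearMap.ker M.mulVecLin with hWpdef
  have hM : ∀ (v : Fin n → F) (i : Fin j), M.mulVecLin v i = b i ⬝ᵥ v := fun v i => rfl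
  have hsurj : LinearMap.range M.mulVecLin = ⊤ := by
    rw [LinearMap.range_eq_top]
    intro t
    refine ⟨∑ l, t l • dv l, ?_⟩
    funext i
    have h1 : M.mulVecLin (∑ l, t l • dv l) i = ∑ l, t l * (b i ⬝ᵥ dv l) := by
      rw [map_sum, Finset.sum_apply]
      refine Finset.sum_congr rfl fun l _ => ?_
      rw [_root_.map_smul]
      rfl
    rw [h1]
    simp only [hdv, mul_ite, mul_one, mul_zero]
    rw [Finset.sum_ite_eq]
    simp
  have hWpfin : Module.finrank F ↥Wp = n - j := by
    rw [hWpdef]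
    have h1 := LinearMap.finrank_range_add_finrank_ker M.mulVecLin
    rw [hsurj, finrank_top, Module.finrank_fin_fun, Module.finrank_fin_fun] at h1
    omega
  have halo' : ∀ i, alo i ∈ Wp := by
    intro i
    rw [hWpdef, LinearMap.mem_ker]
    funext m
    rw [hM]
    exact horth m i
  have haloli' : LinearIndependent F (fun i => (⟨alo i, halo' i⟩ : ↥Wp)) := by
    apply LinearIndependent.of_comp Wp.subtype
    exact halo
  have hdm : d ≤ n - j := by omega
  obtain ⟨C, hCli, hCp⟩ := extend_li hdm hWpfin.symm _ haloli'
  set cvec : Fin (n - j) → (Fin n → F) := fun i => ↑(C i) with hcvecdef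
  have hcli : LinearIndependent F cvec := hCli.map' Wp.subtype (Submodule.ker_subtype _)
  have hcWp : ∀ (i : Fin (n - j)) (m : Fin j), b m ⬝ᵥ cvec i = 0 := by
    intro i m
    have h1 : M.mulVecLin (cvec i) = 0 := LinearMap.mem_ker.1 (C i).2
    exact congrFun h1 m
  have hcpre : ∀ i : Fin d, cvec ⟨i.val, lt_of_lt_of_le i.2 hdm⟩ = alo i :=
    fun i => congrArg Subtype.val (hCp i)
  set col : Fin n → (Fin n → F) := fun l =>
    if h : l.val < j then dv ⟨l.val, h⟩ else cvec ⟨l.val - j, by have := l.2; omega⟩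
    with hcoldef
  have hcollt : ∀ (l : Fin n) (h : l.val < j), col l = dv ⟨l.val, h⟩ := fun l h => dif_pos h
  have hcolge : ∀ (l : Fin n) (h : ¬ l.val < j),
      col l = cvec ⟨l.val - j, by have := l.2; omega⟩ := fun l h => dif_neg h
  have hbcol : ∀ (i : Fin j) (l : Fin n), b i ⬝ᵥ col l = if l.val = i.val then 1 else 0 := by
    intro i l
    by_cases h : l.val < j
    · rw [hcollt l h, hdv i ⟨l.val, h⟩]
      by_cases he : i = ⟨l.val, h⟩
      · rw [if_pos he, if_pos (by rw [he])]
      · rw [if_neg he, if_neg (fun hh => he (Fin.ext hh.symm))]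
    · rw [hcolge l h, hcWp]
      rw [if_neg (by have := i.2; omega)]
  -- linear independence of the columns
  have hcolli : LinearIndependent F col := by
    rw [Fintype.linearIndependent_iff]
    intro c hc
    have hc1 : ∀ i : Fin j, c ⟨i.val, by have := i.2; omega⟩ = 0 := by
      intro i
      have h := congrArg (fun v => M.mulVecLin v i) hc
      simp only [map_sum, map_zero, Finset.sum_apply, Pi.zero_apply] at h
      have h2 : ∀ l, M.mulVecLin (c l • col l) i = if l.val = i.val then c l else 0 := by
        intro l
        rw [_root_.map_smul]
        have hx : (c l • M.mulVecLin (col l)) i = c l * (b i ⬝ᵥ col l) := rfl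
        rw [hx, hbcol, mul_ite, mul_one, mul_zero]
      have hA : ∑ l, (if (l : Fin n).val = i.val then c l else 0) = 0 :=
        (Finset.sum_congr rfl (fun l _ => (h2 l).symm)).trans h
      have h3 : ∀ l : Fin n, (if l.val = i.val then c l else 0)
          = (if l = (⟨i.val, by have := i.2; omega⟩ : Fin n) then c l else 0) := by
        intro l
        by_cases hl : l = (⟨i.val, by have := i.2; omega⟩ : Fin n)
        · rw [if_pos hl, if_pos (by rw [hl])]
        · rw [if_neg hl, if_neg (fun hh => hl (Fin.ext hh))]
      have hB : ∑ l, (if l = (⟨i.val, by have := i.2; omega⟩ : Fin n) then c l else 0) = 0 :=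
        (Finset.sum_congr rfl (fun l _ => (h3 l).symm)).trans hA
      simp only [Finset.sum_ite_eq', Finset.mem_univ, if_true] at hB
      exact hB
    set e : Fin j ⊕ Fin (n - j) ≃ Fin n :=
      finSumFinEquiv.trans (finCongr (by omega)) with hedef
    have he1 : ∀ i : Fin j, (e (Sum.inl i)).val = i.val := by
      intro i; simp [hedef, finSumFinEquiv_apply_left]
    have he2 : ∀ i : Fin (n - j), (e (Sum.inr i)).val = j + i.val := by
      intro i; simp [hedef, finSumFinEquiv_apply_right]
    have h6 : ∀ i : Fin (n - j), col (e (Sum.inr i)) = cvec i := by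
      intro i
      rw [hcolge _ (by rw [he2]; omega)]
      exact congrArg cvec (Fin.ext (show (e (Sum.inr i)).val - j = i.val by rw [he2]; omega))
    have hsum : ∑ i : Fin (n - j), c (e (Sum.inr i)) • cvec i = 0 := by
      have h4 : ∑ i : Fin (n - j), c (e (Sum.inr i)) • cvec i
          = ∑ l : Fin n, c l • col l := by
        rw [← Equiv.sum_comp e (fun l => c l • col l), Fintype.sum_sum_type]
        have h5 : ∑ i : Fin j, c (e (Sum.inl i)) • col (e (Sum.inl i)) = 0 :=
          Finset.sum_eq_zero (fun i _ => by
            have hee : e (Sum.inl i) = (⟨i.val, by have := i.2; omega⟩ : Fin n) :=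
              Fin.ext (he1 i)
            rw [hee, hc1 i, zero_smul])
        rw [h5, zero_add]
        exact Finset.sum_congr rfl (fun i _ => by rw [h6 i])
      rw [h4, hc]
    have hμ := Fintype.linearIndependent_iff.mp hcli _ hsum
    intro l
    by_cases hl : l.val < j
    · have := hc1 ⟨l.val, hl⟩
      exact this
    · have h7 := hμ ⟨l.val - j, by have := l.2; omega⟩
      have hee : e (Sum.inr ⟨l.val - j, by have := l.2; omega⟩) = l :=
        Fin.ext (by rw [he2]; simp; omega)
      rwa [hee] at h7
  set g : Matrix (Fin n) (Fin n) F := Matrix.of (fun m l => col l m) with hgdef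
  have hgunit : IsUnit g := isUnit_of_li_cols g hcolli
  refine ⟨g, hgunit, ?_, ?_⟩
  · intro i h
    funext l
    have h1 : (gᵀ *ᵥ b i) l = col l ⬝ᵥ b i := rfl
    rw [h1, dotProduct_comm, hbcol i l]
    rw [Pi.single_apply]
    by_cases hh : l = (⟨i.val, h⟩ : Fin n)
    · rw [if_pos (by rw [hh]), if_pos hh]
    · rw [if_neg (fun hv => hh (Fin.ext hv)), if_neg hh]
  · intro i h
    have h1 : g *ᵥ Pi.single (⟨j + i.val, h⟩ : Fin n) 1 = col ⟨j + i.val, h⟩ := by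
      funext m
      rw [Matrix.mulVec_single]
      show g m (⟨j + i.val, h⟩ : Fin n) * 1 = col (⟨j + i.val, h⟩ : Fin n) m
      rw [mul_one]
      rfl
    rw [h1, hcolge _ (show ¬ (⟨j + i.val, h⟩ : Fin n).val < j by show ¬ j + i.val < j; omega)]
    rw [show (⟨(⟨j + i.val, h⟩ : Fin n).val - j, by have := i.2; show j + i.val - j < n - j; omega⟩
          : Fin (n - j))
        = (⟨i.val, lt_of_lt_of_le i.2 hdm⟩ : Fin (n - j)) from
        Fin.ext (show j + i.val - j = i.val by omega)]
    exact hcpre i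
  done

end SiegelAux
end Part5

section Part6
namespace SiegelAux
variable {F : Type*} [Field F] {n : ℕ}
open Module Submodule

set_option maxHeartbeats 1600000 in
set_option synthInstance.maxHeartbeats 1000000 in
lemma exists_p_of_finrank {k j : ℕ} (hjk : j ≤ k) (hkn : k ≤ n)
    {Y : Submodule F ((Fin n ⊕ Fin n) → F)} (hiso : TotIso F n Y)
    (hdim : Module.finrank F Y = k)
    (hinf : Module.finrank F ↥(Y ⊓ V0 F n) = k - j) :
    ∃ p ∈ SiegelP F n, Submodule.map (Matrix.mulVecLin p) (Xsp F n k j) = Y := by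
  classical
  set L : ↥Y →ₗ[F] (Fin n → F) := (pr2 F n).comp Y.subtype with hLdef
  have hkerL : LinearMap.ker L = Submodule.comap Y.subtype (Y ⊓ V0 F n) := by
    rw [hLdef, LinearMap.ker_comp, ← V0_eq_ker]
    ext x
    simp [Submodule.mem_comap, Submodule.mem_inf, x.2]
  have hkerfin : Module.finrank F ↥(LinearMap.ker L) = k - j := by
    rw [hkerL,
      LinearEquiv.finrank_eq (Submodule.comapSubtypeEquivOfLe (inf_le_left : Y ⊓ V0 F n ≤ Y))]
    exact hinf
  have hrange : Module.finrank F ↥(LinearMap.range L) = j := by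
    have h1 := LinearMap.finrank_range_add_finrank_ker L
    rw [hkerfin, hdim] at h1
    omega
  let u : Basis (Fin j) F ↥(LinearMap.range L) :=
    (Module.finBasis F ↥(LinearMap.range L)).reindex (finCongr hrange)
  set b : Fin j → (Fin n → F) := fun i => ↑(u i) with hbdef
  have hbli : LinearIndependent F b :=
    u.linearIndependent.map' (LinearMap.range L).subtype (Submodule.ker_subtype _)
  have hchoice : ∀ i, ∃ y : ↥Y, L y = b i := fun i => LinearMap.mem_range.1 (u i).2
  choose w hw using hchoice
  set whi : Fin j → ((Fin n ⊕ Fin n) → F) := fun i => ↑(w i) with hwhidef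
  have hwY : ∀ i, whi i ∈ Y := fun i => (w i).2
  have hwinr : ∀ i, (whi i) ∘ Sum.inr = b i := fun i => hw i
  let ulo : Basis (Fin (k - j)) F ↥(Y ⊓ V0 F n) :=
    (Module.finBasis F ↥(Y ⊓ V0 F n)).reindex (finCongr hinf)
  set wlo : Fin (k - j) → ((Fin n ⊕ Fin n) → F) := fun i => ↑(ulo i) with hwlodef
  have hloYV : ∀ i, wlo i ∈ Y ⊓ V0 F n := fun i => (ulo i).2
  have hloY : ∀ i, wlo i ∈ Y := fun i => (Submodule.mem_inf.1 (hloYV i)).1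
  have hlo0 : ∀ i, (wlo i) ∘ Sum.inr = 0 :=
    fun i => mem_V0_iff.1 (Submodule.mem_inf.1 (hloYV i)).2
  have hloli : LinearIndependent F wlo :=
    ulo.linearIndependent.map' (Y ⊓ V0 F n).subtype (Submodule.ker_subtype _)
  set alo : Fin (k - j) → (Fin n → F) := fun i => (wlo i) ∘ Sum.inl with haldef
  set ahi : Fin j → (Fin n → F) := fun i => (whi i) ∘ Sum.inl with hahdef
  have haloli : LinearIndependent F alo := by
    rw [Fintype.linearIndependent_iff]
    intro c hc
    have hP1 : (∑ i, c i • wlo i) ∘ Sum.inl = ∑ i, c i • alo i := by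
      funext m
      simp only [Function.comp_apply, Finset.sum_apply, Pi.smul_apply, smul_eq_mul]
      rfl
    have hP2 : (∑ i, c i • wlo i) ∘ Sum.inr = 0 := by
      funext m
      simp only [Function.comp_apply, Finset.sum_apply, Pi.smul_apply, smul_eq_mul]
      show ∑ i, c i * wlo i (Sum.inr m) = (0 : Fin n → F) m
      rw [show (0 : Fin n → F) m = 0 from rfl]
      refine Finset.sum_eq_zero (fun i _ => ?_)
      rw [show wlo i (Sum.inr m) = 0 from congrFun (hlo0 i) m, mul_zero]
    have hv0 : (∑ i, c i • wlo i) = 0 := by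
      rw [← elim_comp (∑ i, c i • wlo i), hP1, hc, hP2]
      funext s; cases s <;> rfl
    exact fun i => Fintype.linearIndependent_iff.mp hloli c hv0 i
  have hB : ∀ v, v ∈ Y → ∀ x, x ∈ Y →
      (v ∘ Sum.inl) ⬝ᵥ (x ∘ Sum.inr) = (v ∘ Sum.inr) ⬝ᵥ (x ∘ Sum.inl) := by
    intro v hv x hx
    have h1 := hiso v hv x hx
    rw [form_eq] at h1
    exact sub_eq_zero.1 h1
  have horth : ∀ m i, b m ⬝ᵥ alo i = 0 := by
    intro m i
    have h1 := hB (whi m) (hwY m) (wlo i) (hloY i)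
    rw [hwinr m, hlo0 i, dotProduct_zero] at h1
    exact h1.symm
  have hsym2 : ∀ m l, ahi m ⬝ᵥ b l = b m ⬝ᵥ ahi l := by
    intro m l
    have h1 := hB (whi m) (hwY m) (whi l) (hwY l)
    rw [hwinr m, hwinr l] at h1
    exact h1
  obtain ⟨g, hgunit, hgT, hgcolv⟩ := exists_g (by omega) b hbli alo haloli horth
  have hdet : IsUnit g.det := (Matrix.isUnit_iff_isUnit_det g).1 hgunit
  have hginvT : ∀ (i : Fin j) (h : (i : ℕ) < n),
      (g⁻¹)ᵀ *ᵥ Pi.single (⟨i.val, h⟩ : Fin n) 1 = b i := by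
    intro i h
    rw [Matrix.transpose_nonsing_inv, ← hgT i h, Matrix.mulVec_mulVec,
      Matrix.nonsing_inv_mul _ (by rwa [Matrix.det_transpose]), Matrix.one_mulVec]
  have hginv_entry : ∀ (m : Fin n) (hm : (m : ℕ) < j) (x : Fin n → F),
      (g⁻¹ *ᵥ x) m = b ⟨m.val, hm⟩ ⬝ᵥ x := by
    intro m hm x
    have h1 : (g⁻¹ *ᵥ x) m = Pi.single m (1 : F) ⬝ᵥ (g⁻¹ *ᵥ x) := by
      rw [single_dotProduct, one_mul]
    rw [h1, Matrix.dotProduct_mulVec, ← Matrix.mulVec_transpose,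
      hginvT ⟨m.val, hm⟩ m.2]
  set S : Matrix (Fin n) (Fin n) F := Matrix.of (fun m l =>
    if hl : (l : ℕ) < j then (g⁻¹ *ᵥ ahi ⟨l.val, hl⟩) m
    else if hm : (m : ℕ) < j then (g⁻¹ *ᵥ ahi ⟨m.val, hm⟩) l else 0) with hSdef
  have hSlt : ∀ (m l : Fin n) (hl : (l : ℕ) < j), S m l = (g⁻¹ *ᵥ ahi ⟨l.val, hl⟩) m :=
    fun m l hl => dif_pos hl
  have hSge : ∀ (m l : Fin n) (hl : ¬ (l : ℕ) < j),
      S m l = if hm : (m : ℕ) < j then (g⁻¹ *ᵥ ahi ⟨m.val, hm⟩) l else 0 :=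
    fun m l hl => dif_neg hl
  have hS : ∀ m l, S m l = S l m := by
    intro m l
    by_cases hl : (l : ℕ) < j <;> by_cases hm : (m : ℕ) < j
    · rw [hSlt m l hl, hSlt l m hm, hginv_entry m hm, hginv_entry l hl,
        ← hsym2 ⟨m.val, hm⟩ ⟨l.val, hl⟩]
      exact dotProduct_comm _ _
    · rw [hSlt m l hl, hSge l m (by omega), dif_pos hl]
    · rw [hSge m l hl, dif_pos hm, hSlt l m hm]
    · rw [hSge m l hl, dif_neg hm, hSge l m (by omega), dif_neg hl]
  set Xm : Matrix (Fin n) (Fin n) F := g * S with hXmdef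
  have hXsymm : (g⁻¹ * Xm)ᵀ = g⁻¹ * Xm := by
    rw [hXmdef, Matrix.nonsing_inv_mul_cancel_left _ _ hdet]
    ext m l
    rw [Matrix.transpose_apply]
    exact hS l m
  have hXcol : ∀ (i : Fin j) (h : (i : ℕ) < n),
      Xm *ᵥ Pi.single (⟨i.val, h⟩ : Fin n) 1 = ahi i := by
    intro i h
    rw [hXmdef, ← Matrix.mulVec_mulVec]
    have h1 : S *ᵥ Pi.single (⟨i.val, h⟩ : Fin n) 1 = g⁻¹ *ᵥ ahi i := by
      funext m
      rw [Matrix.mulVec_single]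
      show S m (⟨i.val, h⟩ : Fin n) * 1 = (g⁻¹ *ᵥ ahi i) m
      rw [mul_one, hSlt m _ i.2]
    rw [h1, Matrix.mulVec_mulVec, Matrix.mul_nonsing_inv _ hdet, Matrix.one_mulVec]
  refine ⟨Matrix.fromBlocks g Xm 0 (g⁻¹)ᵀ, ⟨g, Xm, hgunit, hXsymm, rfl⟩, ?_⟩
  rw [Xsp_eq hjk hkn, Submodule.map_span, ← Set.range_comp]
  have hcomp : (⇑(Matrix.mulVecLin (Matrix.fromBlocks g Xm 0 (g⁻¹)ᵀ)) ∘
      Sum.elim (xA F n j (hjk.trans hkn)) (xB F n k j hkn)) = Sum.elim whi wlo := by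
    funext s
    cases s with
    | inl i =>
      show (Matrix.fromBlocks g Xm 0 (g⁻¹)ᵀ) *ᵥ
        Pi.single (Sum.inr (⟨i.val, lt_of_lt_of_le i.2 (hjk.trans hkn)⟩ : Fin n)) 1 = whi i
      rw [fromBlocks_mulVec_single_inr, hXcol i (lt_of_lt_of_le i.2 (hjk.trans hkn)),
        hginvT i (lt_of_lt_of_le i.2 (hjk.trans hkn)), ← hwinr i]
      exact elim_comp (whi i)
    | inr i =>
      show (Matrix.fromBlocks g Xm 0 (g⁻¹)ᵀ) *ᵥ
        Pi.single (Sum.inl (⟨j + i.val, by have := i.2; omega⟩ : Fin n)) 1 = wlo i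
      rw [fromBlocks_mulVec_single_inl, hgcolv i (by have := i.2; omega)]
      rw [show (0 : Fin n → F) = wlo i ∘ Sum.inr from (hlo0 i).symm]
      exact elim_comp (wlo i)
  rw [hcomp]
  have hli : LinearIndependent F (Sum.elim whi wlo) := by
    apply li_elim
    · rw [show (fun i => (whi i) ∘ Sum.inr) = b from funext hwinr]
      exact hbli
    · exact hlo0
    · exact hloli
  refine Submodule.eq_of_le_of_finrank_eq ?_ ?_
  · rw [Submodule.span_le]
    rintro v ⟨(i | i), rfl⟩
    · exact hwY i
    · exact hloY i
  · rw [finrank_span_eq_card hli, hdim]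
    simp only [Fintype.card_sum, Fintype.card_fin]
    omega

end SiegelAux
end Part6


/-- every `k`-dimensional totally isotropic subspace `Y` of `F^{2n}` lies
in the `P`-orbit of `X_j` if and only if `dim (Y ⊓ V₀) = k - j`; in particular it lies
in the `P`-orbit of exactly one of `X_0, …, X_k`. -/
theorem siegel_orbits_on_isotropic (h2 : (2 : F) ≠ 0) (n k : ℕ) (hk1 : 1 ≤ k) (hkn : k ≤ n)
    (Y : Submodule F ((Fin n ⊕ Fin n) → F)) (hiso : TotIso F n Y)
    (hdim : Module.finrank F Y = k) :
    (∀ j ≤ k,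
      ((∃ p ∈ SiegelP F n, Submodule.map (Matrix.mulVecLin p) (Xsp F n k j) = Y) ↔
        Module.finrank F ↥(Y ⊓ V0 F n) = k - j)) ∧
    (∃! j : ℕ, j ≤ k ∧ ∃ p ∈ SiegelP F n,
      Submodule.map (Matrix.mulVecLin p) (Xsp F n k j) = Y) := by
  have hdle : Module.finrank F ↥(Y ⊓ V0 F n) ≤ k := by
    rw [← hdim]
    exact Submodule.finrank_mono inf_le_left
  have hmain : ∀ j ≤ k,
      ((∃ p ∈ SiegelP F n, Submodule.map (Matrix.mulVecLin p) (Xsp F n k j) = Y) ↔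
        Module.finrank F ↥(Y ⊓ V0 F n) = k - j) := by
    intro j hjk
    constructor
    · rintro ⟨p, hp, hmap⟩
      exact SiegelAux.finrank_inf_of_map hjk hkn hp hmap
    · intro hinf
      exact SiegelAux.exists_p_of_finrank hjk hkn hiso hdim hinf
  refine ⟨hmain, ?_⟩
  refine ⟨k - Module.finrank F ↥(Y ⊓ V0 F n), ⟨by omega, ?_⟩, ?_⟩
  · exact (hmain _ (by omega)).2 (by omega)
  · rintro j ⟨hjk, hex⟩
    have hj := (hmain j hjk).1 hex
    omega
end

section
/- Let B̄ denote the subgroup of lower-triangular invertible matrices in GL_2(F) and B the subgroup of upper-triangular invertible matrices, and let h₁ = [[0, 1], [1, 0]]. Then GL_2(F) is the disjoint union of the double cosets B̄·O_2(F,C) and B̄·h₁·O_2(F,C); moreover GL_2(F) is also the disjoint union of B·O_2(F,C) and B·h₁·O_2(F,C). -/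
open Matrix

variable (F : Type*) [Field F]

/-- The orthogonal group `O_2(F, C)` for `C = [[γ, 0], [0, 0]]`. -/
def O2grp (γ : F) : Set (Matrix (Fin 2) (Fin 2) F) :=
  {g | IsUnit g ∧ gᵀ * !![γ, 0; 0, 0] * g = !![γ, 0; 0, 0]}

/-- The lower-triangular Borel `B̄` of `GL_2(F)`. -/
def Bbar : Set (Matrix (Fin 2) (Fin 2) F) := {g | IsUnit g ∧ g 0 1 = 0}

/-- The upper-triangular Borel `B` of `GL_2(F)`. -/
def Bup : Set (Matrix (Fin 2) (Fin 2) F) := {g | IsUnit g ∧ g 1 0 = 0}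

/-- Double coset `A · w · B`. -/
def DC {α : Type*} [Mul α] (A : Set α) (w : α) (B : Set α) : Set α :=
  {x | ∃ a ∈ A, ∃ b ∈ B, x = a * w * b}

lemma O2_lower {γ : F} (t : F) : !![(1:F),0;t,1] ∈ O2grp F γ := by
  constructor
  · rw [Matrix.isUnit_iff_isUnit_det, Matrix.det_fin_two_of]; simp
  · ext i j
    fin_cases i <;> fin_cases j <;> simp [Matrix.mul_apply, Fin.sum_univ_two]

lemma O2_one {γ : F} : (1 : Matrix (Fin 2) (Fin 2) F) ∈ O2grp F γ :=
  ⟨isUnit_one, by simp⟩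

lemma O2_props {γ : F} (hγ : γ ≠ 0) {b : Matrix (Fin 2) (Fin 2) F}
    (hb : b ∈ O2grp F γ) : b 0 1 = 0 ∧ b 0 0 ≠ 0 ∧ b 1 1 ≠ 0 := by
  obtain ⟨hu, he⟩ := hb
  have h11 := congrFun (congrFun he 1) 1
  simp [Matrix.mul_apply, Fin.sum_univ_two] at h11
  have h01 : b 0 1 = 0 := by tauto
  have hdet : b.det ≠ 0 := by
    intro h
    rw [Matrix.isUnit_iff_isUnit_det, h] at hu
    simp at hu
  rw [Matrix.det_fin_two, h01] at hdet
  simp only [zero_mul, sub_zero, mul_ne_zero_iff] at hdet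
  exact ⟨h01, hdet.1, hdet.2⟩

lemma tri_det_ne {a : Matrix (Fin 2) (Fin 2) F} (hu : IsUnit a) (h01 : a 0 1 = 0) :
    a 0 0 ≠ 0 ∧ a 1 1 ≠ 0 := by
  have hdet : a.det ≠ 0 := by
    intro h
    rw [Matrix.isUnit_iff_isUnit_det, h] at hu
    simp at hu
  rw [Matrix.det_fin_two, h01] at hdet
  simp only [zero_mul, sub_zero, mul_ne_zero_iff] at hdet
  exact hdet

lemma tri_det_ne' {a : Matrix (Fin 2) (Fin 2) F} (hu : IsUnit a) (h10 : a 1 0 = 0) :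
    a 0 0 ≠ 0 ∧ a 1 1 ≠ 0 := by
  have hdet : a.det ≠ 0 := by
    intro h
    rw [Matrix.isUnit_iff_isUnit_det, h] at hu
    simp at hu
  rw [Matrix.det_fin_two, h10] at hdet
  simp only [mul_zero, sub_zero, mul_ne_zero_iff] at hdet
  exact hdet


/-- `GL_2(F)` is the disjoint union of `B̄ · O_2(F,C)` and `B̄ · h₁ · O_2(F,C)`,
and also the disjoint union of `B · O_2(F,C)` and `B · h₁ · O_2(F,C)`, where
`h₁ = [[0,1],[1,0]]`. -/
theorem Borel_O2_double_cosets (h2 : (2 : F) ≠ 0) (γ : F) (hγ : γ ≠ 0) :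
    ({g : Matrix (Fin 2) (Fin 2) F | IsUnit g} =
        DC (Bbar F) 1 (O2grp F γ) ∪ DC (Bbar F) !![0, 1; 1, 0] (O2grp F γ)) ∧
    Disjoint (DC (Bbar F) 1 (O2grp F γ)) (DC (Bbar F) !![0, 1; 1, 0] (O2grp F γ)) ∧
    ({g : Matrix (Fin 2) (Fin 2) F | IsUnit g} =
        DC (Bup F) 1 (O2grp F γ) ∪ DC (Bup F) !![0, 1; 1, 0] (O2grp F γ)) ∧
    Disjoint (DC (Bup F) 1 (O2grp F γ)) (DC (Bup F) !![0, 1; 1, 0] (O2grp F γ)) := by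
  have hswapu : IsUnit (!![(0:F),1;1,0]) := by
    rw [Matrix.isUnit_iff_isUnit_det, Matrix.det_fin_two_of]
    simp
  -- first cell membership criteria
  have hDC1bar : ∀ x, x ∈ DC (Bbar F) 1 (O2grp F γ) → IsUnit x ∧ x 0 1 = 0 := by
    rintro x ⟨a, ⟨hau, ha01⟩, b, hb, rfl⟩
    obtain ⟨hb01, -, -⟩ := O2_props F hγ hb
    refine ⟨(hau.mul isUnit_one).mul hb.1, ?_⟩
    simp [Matrix.mul_apply, Fin.sum_univ_two, ha01, hb01]
  have hDC2bar : ∀ x, x ∈ DC (Bbar F) !![0, 1; 1, 0] (O2grp F γ) →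
      IsUnit x ∧ x 0 1 ≠ 0 := by
    rintro x ⟨a, ⟨hau, ha01⟩, b, hb, rfl⟩
    obtain ⟨hb01, -, hb11⟩ := O2_props F hγ hb
    obtain ⟨ha00, -⟩ := tri_det_ne F hau ha01
    refine ⟨(hau.mul hswapu).mul hb.1, ?_⟩
    simp [Matrix.mul_apply, Fin.sum_univ_two, ha01, hb01]
    exact ⟨ha00, hb11⟩
  have hDC1up : ∀ x, x ∈ DC (Bup F) 1 (O2grp F γ) → IsUnit x ∧ x 1 1 ≠ 0 := by
    rintro x ⟨a, ⟨hau, ha10⟩, b, hb, rfl⟩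
    obtain ⟨hb01, -, hb11⟩ := O2_props F hγ hb
    obtain ⟨-, ha11⟩ := tri_det_ne' F hau ha10
    refine ⟨(hau.mul isUnit_one).mul hb.1, ?_⟩
    simp [Matrix.mul_apply, Fin.sum_univ_two, ha10, hb01]
    exact ⟨ha11, hb11⟩
  have hDC2up : ∀ x, x ∈ DC (Bup F) !![0, 1; 1, 0] (O2grp F γ) →
      IsUnit x ∧ x 1 1 = 0 := by
    rintro x ⟨a, ⟨hau, ha10⟩, b, hb, rfl⟩
    obtain ⟨hb01, -, -⟩ := O2_props F hγ hb
    refine ⟨(hau.mul hswapu).mul hb.1, ?_⟩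
    simp [Matrix.mul_apply, Fin.sum_univ_two, ha10, hb01]
  refine ⟨?_, ?_, ?_, ?_⟩
  · ext x
    simp only [Set.mem_setOf_eq, Set.mem_union]
    constructor
    · intro hx
      by_cases h01 : x 0 1 = 0
      · left
        exact ⟨x, ⟨hx, h01⟩, 1, O2_one F, by simp⟩
      · right
        refine ⟨x * !![0,1;1,-(x 0 0 / x 0 1)], ?_, !![1,0;x 0 0 / x 0 1,1],
          O2_lower F _, ?_⟩
        · constructor
          · refine hx.mul ?_
            rw [Matrix.isUnit_iff_isUnit_det, Matrix.det_fin_two_of]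
            simp
          · simp [Matrix.mul_apply, Fin.sum_univ_two]
            field_simp
            ring
        · rw [mul_assoc, mul_assoc]
          have : (!![(0:F),1;1,-(x 0 0 / x 0 1)] * (!![0, 1; 1, 0] * !![1,0;x 0 0 / x 0 1,1]))
              = 1 := by
            ext i j
            fin_cases i <;> fin_cases j <;>
              simp [Matrix.mul_apply, Fin.sum_univ_two] <;> ring
          rw [this, mul_one]
    · rintro (h | h)
      · exact (hDC1bar x h).1
      · exact (hDC2bar x h).1
  · rw [Set.disjoint_left]
    intro x h1 h2
    exact (hDC2bar x h2).2 (hDC1bar x h1).2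
  · ext x
    simp only [Set.mem_setOf_eq, Set.mem_union]
    constructor
    · intro hx
      by_cases h11 : x 1 1 = 0
      · right
        refine ⟨x * !![0,1;1,0], ⟨hx.mul hswapu, ?_⟩, 1, O2_one F, ?_⟩
        · simp [Matrix.mul_apply, Fin.sum_univ_two, h11]
        · rw [mul_one, mul_assoc]
          have : (!![(0:F),1;1,0] * !![0, 1; 1, 0]) = 1 := by
            ext i j
            fin_cases i <;> fin_cases j <;> simp [Matrix.mul_apply, Fin.sum_univ_two]
          rw [this, mul_one]
      · left
        refine ⟨x * !![1,0;-(x 1 0 / x 1 1),1], ?_, !![1,0;x 1 0 / x 1 1,1],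
          O2_lower F _, ?_⟩
        · constructor
          · refine hx.mul ?_
            rw [Matrix.isUnit_iff_isUnit_det, Matrix.det_fin_two_of]
            simp
          · simp [Matrix.mul_apply, Fin.sum_univ_two]
            field_simp
            ring
        · rw [mul_one, mul_assoc]
          have : (!![(1:F),0;-(x 1 0 / x 1 1),1] * !![1,0;x 1 0 / x 1 1,1]) = 1 := by
            ext i j
            fin_cases i <;> fin_cases j <;>
              simp [Matrix.mul_apply, Fin.sum_univ_two] <;> ring
          rw [this, mul_one]
    · rintro (h | h)
      · exact (hDC1up x h).1
      · exact (hDC2up x h).1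
  · rw [Set.disjoint_left]
    intro x h1 h2
    exact (hDC1up x h1).2 (hDC2up x h2).2
end
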